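/- Let Ω be a measurable space, and let E and X be Polish spaces. Let G : Ω → E be a closed-valued open-measurable multifunction and let F : Ω × E → X be a closed-valued open-measurable multifunction, where Ω × E carries the product σ-algebra of the σ-algebra of Ω and the Borel σ-algebra of E. Then the multifunction H : Ω → X defined by H(ω) := ⋃_{b ∈ G(ω)} F(ω, b) is universally open-measurable: for every open U ⊆ X and every finite measure μ on Ω, the set {ω | H(ω) ∩ U ≠ ∅} lies in the μ-completion of the σ-algebra of Ω. -/

import Mathlib

open MeasureTheory

/-!
The set `{ω | H ω ∩ U ≠ ∅}` is the projection to `Ω` of `A = {(ω, b) | b ∈ G ω, F (ω, b) ∩ U ≠ ∅}`.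
`A` is measurable: the graph of `G` is the zero set of `(ω, b) ↦ infEDist b (G ω)`, which is
measurable in `ω` and continuous in `b`. A measurable subset of `Ω × E` involves only countably
many measurable subsets of `Ω`, so it is the preimage of a measurable subset of `(ℕ → Bool) × E`
under `φ × id` for some measurable `φ : Ω → ℕ → Bool`, and its projection is the `φ`-preimage of
an analytic set. Analytic sets are null-measurable for every finite measure by capacitability:
choosing `τ` one coordinate at a time so that `f '' {σ | ∀ i < k, σ i ≤ τ i}` keeps measure above
`c`, the closures of these sets decrease to a subset of the compact set `f '' {σ | σ ≤ τ}`.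
-/

open Set Filter Topology Function Metric

def prefixBox (τ : ℕ → ℕ) (k : ℕ) : Set (ℕ → ℕ) := (Iio k).pi fun i => Iic (τ i)

theorem prefixBox_congr {τ τ' : ℕ → ℕ} {k : ℕ} (h : ∀ i < k, τ i = τ' i) :
    prefixBox τ k = prefixBox τ' k :=
  pi_congr rfl fun i hi => by rw [h i hi]

theorem antitone_prefixBox (τ : ℕ → ℕ) : Antitone (prefixBox τ) :=
  fun _ _ hkl => pi_mono' (fun _ _ => subset_rfl) (Iio_subset_Iio hkl)

theorem prefixBox_update_succ (τ : ℕ → ℕ) (k n : ℕ) :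
    prefixBox (update τ k n) (k + 1) = prefixBox τ k ∩ {σ | σ k ≤ n} := by
  ext σ
  simp only [prefixBox, Set.mem_pi, mem_Iio, mem_Iic, mem_inter_iff, mem_ofPred_eq,
    Nat.forall_lt_succ_right, update_self]
  refine and_congr_left' (forall₂_congr fun i hi => ?_)
  rw [update_of_ne hi.ne]

theorem iUnion_prefixBox_update_succ (τ : ℕ → ℕ) (k : ℕ) :
    ⋃ n, prefixBox (update τ k n) (k + 1) = prefixBox τ k := by
  simp only [prefixBox_update_succ, ← inter_iUnion]
  exact inter_eq_left.2 fun σ _ => mem_iUnion.2 ⟨σ k, (le_rfl : σ k ≤ σ k)⟩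

theorem monotone_prefixBox_update_succ (τ : ℕ → ℕ) (k : ℕ) :
    Monotone fun n => prefixBox (update τ k n) (k + 1) := by
  intro m n hmn
  simp only [prefixBox_update_succ]
  exact inter_subset_inter_right _ fun σ hσ => le_trans hσ hmn

theorem exists_mapClusterPt_of_mem_prefixBox {τ : ℕ → ℕ} {σ : ℕ → ℕ → ℕ}
    (hσ : ∀ k, σ k ∈ prefixBox τ k) :
    ∃ a ∈ univ.pi fun i => Iic (τ i), MapClusterPt a atTop σ := by
  let u := Ultrafilter.of (atTop : Filter ℕ)
  have hcoord : ∀ i, ∃ a ∈ Iic (τ i), ↑(u.map fun k => σ k i) ≤ 𝓝 a := fun i =>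
    (finite_Iic (τ i)).isCompact.ultrafilter_le_nhds _ <| le_principal_iff.2 <|
      Ultrafilter.of_le atTop <| (eventually_gt_atTop i).mono fun k hk => hσ k i hk
  choose a ha hlim using hcoord
  exact ⟨a, fun i _ => ha i,
    mapClusterPt_iff_ultrafilter.2 ⟨u, Ultrafilter.of_le _, tendsto_pi_nhds.2 hlim⟩⟩

section Capacitability

variable {X : Type*} {f : (ℕ → ℕ) → X}

theorem iInter_closure_image_prefixBox_subset [TopologicalSpace X] [T2Space X]
    (hf : Continuous f) (τ : ℕ → ℕ) :
    ⋂ k, closure (f '' prefixBox τ k) ⊆ f '' univ.pi fun i => Iic (τ i) := by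
  intro x hx
  by_contra hxL
  obtain ⟨W, V, hW, hV, hLW, hxV, hWV⟩ := SeparatedNhds.of_isCompact_isCompact
    ((isCompact_univ_pi fun i => (finite_Iic (τ i)).isCompact).image hf) isCompact_singleton
    (disjoint_singleton_right.2 hxL)
  have hmeet : ∀ k, ∃ σ ∈ prefixBox τ k, f σ ∈ V := fun k => by
    obtain ⟨_, hyV, σ, hσ, rfl⟩ := mem_closure_iff.1 (mem_iInter.1 hx k) V hV (hxV rfl)
    exact ⟨σ, hσ, hyV⟩
  choose σ hσ hσV using hmeet
  obtain ⟨a, haL, ha⟩ := exists_mapClusterPt_of_mem_prefixBox hσ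
  have hfaV : f a ∈ closure V :=
    (ha.continuousAt_comp hf.continuousAt).mem_closure_of_mem V (mem_map.2 (univ_mem' hσV))
  exact (hWV.closure_right hW).ne_of_mem (hLW ⟨a, haL, rfl⟩) hfaV rfl

variable [MeasurableSpace X] {ν : Measure X} {c : ENNReal}

theorem exists_lt_measure_image_prefixBox_update_succ {τ : ℕ → ℕ} {k : ℕ}
    (h : c < ν (f '' prefixBox τ k)) : ∃ n, c < ν (f '' prefixBox (update τ k n) (k + 1)) := by
  rwa [← iUnion_prefixBox_update_succ τ k, image_iUnion,
    Monotone.measure_iUnion fun _ _ hmn => image_mono (monotone_prefixBox_update_succ τ k hmn),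
    lt_iSup_iff] at h

theorem exists_forall_lt_measure_image_prefixBox (hc : c < ν (range f)) :
    ∃ τ : ℕ → ℕ, ∀ k, c < ν (f '' prefixBox τ k) := by
  have hstep : ∀ τ k, ∃ n, c < ν (f '' prefixBox τ k) →
      c < ν (f '' prefixBox (update τ k n) (k + 1)) := fun τ k => by
    by_cases h : c < ν (f '' prefixBox τ k)
    · exact (exists_lt_measure_image_prefixBox_update_succ h).imp fun _ hn _ => hn
    · exact ⟨0, fun h' => absurd h' h⟩
  choose next hnext using hstep
  -- `T k` fixes the first `k` coordinates of `τ`; later stages never change them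
  let T : ℕ → ℕ → ℕ := fun k => Nat.rec 0 (fun k Tk => update Tk k (next Tk k)) k
  have hT : ∀ k, c < ν (f '' prefixBox (T k) k) := by
    intro k
    induction k with
    | zero => simpa [prefixBox] using hc
    | succ k ih => exact hnext (T k) k ih
  have hTstable : ∀ k i, i < k → T k i = T (i + 1) i := by
    intro k
    induction k with
    | zero => exact fun i hi => absurd hi (Nat.not_lt_zero i)
    | succ k ih =>
      intro i hi
      rcases (Nat.lt_succ_iff_lt_or_eq.1 hi) with hik | rfl
      · exact (update_of_ne hik.ne _ _).trans (ih i hik)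
      · rfl
  refine ⟨fun i => T (i + 1) i, fun k => ?_⟩
  rw [prefixBox_congr fun i hi => (hTstable k i hi).symm]
  exact hT k

theorem exists_isCompact_subset_range_le_measure [TopologicalSpace X] [T2Space X]
    [OpensMeasurableSpace X] [IsFiniteMeasure ν] (hf : Continuous f) (hc : c < ν (range f)) :
    ∃ K ⊆ range f, IsCompact K ∧ c ≤ ν K := by
  obtain ⟨τ, hτ⟩ := exists_forall_lt_measure_image_prefixBox hc
  refine ⟨f '' univ.pi fun i => Iic (τ i), image_subset_range _ _,
    (isCompact_univ_pi fun i => (finite_Iic (τ i)).isCompact).image hf, ?_⟩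
  have hanti : Antitone fun k => closure (f '' prefixBox τ k) :=
    fun _ _ hkl => closure_mono (image_mono (antitone_prefixBox τ hkl))
  calc c ≤ ⨅ k, ν (closure (f '' prefixBox τ k)) :=
        le_iInf fun k => (hτ k).le.trans (measure_mono subset_closure)
    _ = ν (⋂ k, closure (f '' prefixBox τ k)) :=
        (hanti.measure_iInter (fun _ => isClosed_closure.nullMeasurableSet)
          ⟨0, measure_ne_top _ _⟩).symm
    _ ≤ _ := measure_mono (iInter_closure_image_prefixBox_subset hf τ)

end Capacitability

theorem MeasureTheory.NullMeasurableSet.of_forall_lt_exists_measurableSet_subset {α : Type*}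
    [MeasurableSpace α] {ν : Measure α} [IsFiniteMeasure ν] {s : Set α}
    (h : ∀ c < ν s, ∃ K ⊆ s, MeasurableSet K ∧ c ≤ ν K) : NullMeasurableSet s ν := by
  rcases eq_or_ne (ν s) 0 with h0 | h0
  · exact NullMeasurableSet.of_null h0
  obtain ⟨c, -, hcs, hc⟩ := exists_seq_strictMono_tendsto' (pos_iff_ne_zero.2 h0)
  choose K hKs hK hcK using fun n => h (c n) (hcs n).2
  have hKs' : (⋃ n, K n) ⊆ s := iUnion_subset hKs
  have hmeas : ν (⋃ n, K n) = ν s := le_antisymm (measure_mono hKs')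
    (le_of_tendsto' hc fun n => (hcK n).trans (measure_mono (subset_iUnion K n)))
  have hnull : ν (s \ ⋃ n, K n) = 0 := by
    rw [measure_sdiff hKs' (MeasurableSet.iUnion hK).nullMeasurableSet (measure_ne_top _ _),
      hmeas, tsub_self]
  rw [← union_sdiff_cancel hKs']
  exact (MeasurableSet.iUnion hK).nullMeasurableSet.union (NullMeasurableSet.of_null hnull)

theorem MeasureTheory.AnalyticSet.nullMeasurableSet {X : Type*} [TopologicalSpace X] [T2Space X]
    [MeasurableSpace X] [OpensMeasurableSpace X] {S : Set X} (hS : AnalyticSet S)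
    (ν : Measure X) [IsFiniteMeasure ν] : NullMeasurableSet S ν := by
  rw [AnalyticSet] at hS
  rcases hS with rfl | ⟨f, hf, rfl⟩
  · exact nullMeasurableSet_empty
  refine NullMeasurableSet.of_forall_lt_exists_measurableSet_subset fun c hc => ?_
  obtain ⟨K, hKf, hK, hcK⟩ := exists_isCompact_subset_range_le_measure hf hc
  exact ⟨K, hKf, hK.measurableSet, hcK⟩

theorem MeasurableSet.exists_eq_preimage_prodMap_cantor {α β : Type*} [MeasurableSpace α]
    [MeasurableSpace β] {A : Set (α × β)} (hA : MeasurableSet A) :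
    ∃ φ : α → ℕ → Bool, Measurable φ ∧
      ∃ A' : Set ((ℕ → Bool) × β), MeasurableSet A' ∧ A = Prod.map φ id ⁻¹' A' := by
  rw [← generateFrom_prod] at hA
  classical
  induction A, hA using MeasurableSpace.generateFrom_induction with
  | hC _ hA _ =>
    obtain ⟨M, hM, B, hB, rfl⟩ := hA
    refine ⟨fun a _ => decide (a ∈ M), ?_, {y | y 0 = true} ×ˢ B,
      (measurableSet_eq_fun (measurable_pi_apply 0) measurable_const).prod hB, ?_⟩
    · exact measurable_pi_lambda _ fun _ => measurable_to_bool (by simpa [preimage] using hM)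
    · ext ⟨a, b⟩
      simp
  | empty => exact ⟨fun _ _ => false, measurable_const, ∅, .empty, rfl⟩
  | compl _ _ ih =>
    obtain ⟨φ, hφ, A', hA', rfl⟩ := ih
    exact ⟨φ, hφ, A'ᶜ, hA'.compl, rfl⟩
  | iUnion A _ ih =>
    choose φ hφ A' hA' hA using ih
    let ρ : ℕ → (ℕ → Bool) → ℕ → Bool := fun n y k => y (Nat.pair n k)
    have hρ : ∀ n, Measurable (ρ n) := fun _ =>
      measurable_pi_lambda _ fun _ => measurable_pi_apply _
    refine ⟨fun a m => φ m.unpair.1 a m.unpair.2,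
      measurable_pi_lambda _ fun m => (measurable_pi_apply _).comp (hφ _),
      ⋃ n, Prod.map (ρ n) id ⁻¹' A' n,
      .iUnion fun n => ((hρ n).prodMap measurable_id) (hA' n), ?_⟩
    simp only [preimage_iUnion, ← preimage_comp, Prod.map_comp_map, comp_id]
    refine iUnion_congr fun n => ?_
    rw [hA n]
    congr
    ext a k
    simp [ρ]

theorem MeasurableSet.nullMeasurableSet_image_fst {α E : Type*} [MeasurableSpace α]
    [TopologicalSpace E] [PolishSpace E] [MeasurableSpace E] [BorelSpace E] {A : Set (α × E)}
    (hA : MeasurableSet A) (μ : Measure α) [IsFiniteMeasure μ] :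
    NullMeasurableSet (Prod.fst '' A) μ := by
  obtain ⟨φ, hφ, A', hA', rfl⟩ := hA.exists_eq_preimage_prodMap_cantor
  have : PolishSpace (ℕ → Bool) := instPolishSpaceOfSeparableSpaceOfIsCompletelyMetrizableSpace
  have hfst : Prod.fst '' (Prod.map φ id ⁻¹' A') = φ ⁻¹' (Prod.fst '' A') := by
    ext a
    simp
  rw [hfst]
  exact ((hA'.analyticSet.image_of_continuous continuous_fst).nullMeasurableSet _).preimage
    (hφ.measurePreserving μ).quasiMeasurePreserving

theorem measurableSet_graph_of_isClosed {Ω E : Type*} [MeasurableSpace Ω] [TopologicalSpace E]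
    [TopologicalSpace.MetrizableSpace E] [SecondCountableTopology E] [MeasurableSpace E]
    [OpensMeasurableSpace E] {G : Ω → Set E} (hGcl : ∀ ω, IsClosed (G ω))
    (hG : ∀ U : Set E, IsOpen U → MeasurableSet {ω | (G ω ∩ U).Nonempty}) :
    MeasurableSet {p : Ω × E | p.2 ∈ G p.1} := by
  let := TopologicalSpace.metrizableSpaceMetric E
  have hmeas : ∀ b, Measurable fun ω => infEDist b (G ω) := fun b =>
    measurable_of_Iio fun r => by
      have : (fun ω => infEDist b (G ω)) ⁻¹' Iio r = {ω | (G ω ∩ eball b r).Nonempty} := by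
        ext ω
        simp [infEDist_lt_iff, Set.Nonempty, edist_comm b]
      exact this ▸ hG _ isOpen_eball
  have hjoint : Measurable fun p : Ω × E => infEDist p.2 (G p.1) :=
    (measurable_uncurry_of_continuous_of_measurable (u := fun b ω => infEDist b (G ω))
      (fun _ => continuous_infEDist) hmeas).comp measurable_swap
  have hgraph : {p : Ω × E | p.2 ∈ G p.1} = (fun p => infEDist p.2 (G p.1)) ⁻¹' {0} := by
    ext p
    rw [mem_preimage, mem_singleton_iff, ← mem_closure_iff_infEDist_zero, (hGcl _).closure_eq,
      mem_ofPred_eq]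
  rw [hgraph]
  exact hjoint (measurableSet_singleton 0)

theorem stmt_18_general {Ω : Type*} [MeasurableSpace Ω]
    {E : Type*} [TopologicalSpace E] [PolishSpace E] [MeasurableSpace E] [BorelSpace E]
    {X : Type*} [TopologicalSpace X]
    (G : Ω → Set E)
    (hGcl : ∀ ω, IsClosed (G ω))
    (hG : ∀ U : Set E, IsOpen U → MeasurableSet {ω | (G ω ∩ U).Nonempty})
    (F : Ω × E → Set X)
    (hF : ∀ U : Set X, IsOpen U → MeasurableSet {p : Ω × E | (F p ∩ U).Nonempty}) :
    ∀ U : Set X, IsOpen U → ∀ (μ : Measure Ω), IsFiniteMeasure μ →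
      NullMeasurableSet {ω | ((⋃ b ∈ G ω, F (ω, b)) ∩ U).Nonempty} μ := by
  intro U hU μ _
  have hA := (measurableSet_graph_of_isClosed hGcl hG).inter (hF U hU)
  convert hA.nullMeasurableSet_image_fst μ using 1
  ext ω
  simp only [Set.Nonempty, mem_ofPred_eq, mem_inter_iff, mem_iUnion₂, mem_image, Prod.exists,
    exists_and_right, exists_eq_right]
  aesop

/-- If `G : Ω → E` and `F : Ω × E → X` are closed-valued open-measurable multifunctions
into Polish spaces, then `H ω = ⋃ b ∈ G ω, F (ω, b)` is universally open-measurable. -/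
theorem stmt_18 {Ω : Type*} [MeasurableSpace Ω]
    {E : Type*} [TopologicalSpace E] [PolishSpace E] [MeasurableSpace E] [BorelSpace E]
    {X : Type*} [TopologicalSpace X] [PolishSpace X]
    (G : Ω → Set E)
    (hGcl : ∀ ω, IsClosed (G ω))
    (hG : ∀ U : Set E, IsOpen U → MeasurableSet {ω | (G ω ∩ U).Nonempty})
    (F : Ω × E → Set X)
    (hFcl : ∀ p, IsClosed (F p))
    (hF : ∀ U : Set X, IsOpen U → MeasurableSet {p : Ω × E | (F p ∩ U).Nonempty}) :
    ∀ U : Set X, IsOpen U → ∀ (μ : Measure Ω), IsFiniteMeasure μ →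
      NullMeasurableSet {ω | ((⋃ b ∈ G ω, F (ω, b)) ∩ U).Nonempty} μ :=
  stmt_18_general G hGcl hG F hF
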